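/- Let V be a finite-dimensional real vector space with a positive compatible pair (Ω, j) and let T be a Nijenhuis-type tensor on (V, Ω, j). Then: (i) if X, Y ∈ (Im T)^⊥ then T(X,Y) = 0; and (ii) Ker T = {X ∈ (Im T)^⊥ : T(X, A) = 0 for all A ∈ Im T}. -/
import Mathlib


/-- Let `(V, Ω, j)` be a finite-dimensional real vector space with a
positive compatible pair and `T` a Nijenhuis-type tensor.  Then:
(i) if `X, Y ∈ (Im T)ᗮ` then `T X Y = 0`; and
(ii) `Ker T = {X ∈ (Im T)ᗮ : T X A = 0 for all A ∈ Im T}`. -/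
theorem stmt_3 (V : Type*) [AddCommGroup V] [Module ℝ V] [FiniteDimensional ℝ V]
    (Ω : V →ₗ[ℝ] V →ₗ[ℝ] ℝ) (j : V →ₗ[ℝ] V)
    (hΩalt : ∀ X : V, Ω X X = 0)
    (hΩnondeg : ∀ X : V, (∀ Y : V, Ω X Y = 0) → X = 0)
    (hj2 : ∀ X : V, j (j X) = -X)
    (hcompat : ∀ X Y : V, Ω (j X) (j Y) = Ω X Y)
    (hpos : ∀ X : V, X ≠ 0 → 0 < Ω X (j X))
    (T : V →ₗ[ℝ] V →ₗ[ℝ] V)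
    (hskew : ∀ X Y : V, T X Y = - T Y X)
    (hTj : ∀ X Y : V, T (j X) Y = - j (T X Y))
    (hcyc : ∀ X Y Z : V, Ω (T X Y) Z + Ω (T Y Z) X + Ω (T Z X) Y = 0)
    -- the image subspace `Im T` and its `Ω`-orthogonal complement
    (ImT : Submodule ℝ V) (hImT : ImT = Submodule.span ℝ {v : V | ∃ X Y : V, v = T X Y})
    (perp : Set V) (hperp : perp = {X : V | ∀ A ∈ ImT, Ω A X = 0}) :
    (∀ X ∈ perp, ∀ Y ∈ perp, T X Y = 0) ∧
    {X : V | ∀ Y : V, T X Y = 0} = {X : V | X ∈ perp ∧ ∀ A ∈ ImT, T X A = 0} := by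
  subst hImT hperp
  have hmem : ∀ Y Z : V, T Y Z ∈ Submodule.span ℝ {v : V | ∃ X Y : V, v = T X Y} :=
    fun Y Z => Submodule.subset_span ⟨Y, Z, rfl⟩
  constructor
  · intro X hX Y hY
    apply hΩnondeg
    intro Z
    have hc := hcyc X Y Z
    have h1 : Ω (T Y Z) X = 0 := hX _ (hmem Y Z)
    have h2 : Ω (T Z X) Y = 0 := hY _ (hmem Z X)
    linarith
  · ext X
    simp only [Set.mem_setOf_eq]
    constructor
    · intro h
      refine ⟨?_, fun A _ => h A⟩
      intro A hA
      induction hA using Submodule.span_induction with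
      | mem v hv =>
        obtain ⟨Y, Z, rfl⟩ := hv
        have hc := hcyc X Y Z
        have h1 : T X Y = 0 := h Y
        have h2 : T Z X = 0 := by rw [hskew, h Z, neg_zero]
        rw [h1, h2] at hc
        simpa using hc
      | zero => simp
      | add a b _ _ ha hb => rw [map_add]; simp [ha, hb]
      | smul c a _ ha => rw [map_smul]; simp [ha]
    · rintro ⟨hXp, hXI⟩ Y
      have key : ∀ Z : V, Ω (T X Y) Z = Ω (T X Z) Y := by
        intro Z
        have hc := hcyc X Y Z
        have h1 : Ω (T Y Z) X = 0 := hXp _ (hmem Y Z)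
        have h2 : Ω (T Z X) Y = - Ω (T X Z) Y := by rw [hskew Z X]; simp
        linarith
      by_contra hW
      have hpos' := hpos _ hW
      have hTXW : T X (T X Y) = 0 := hXI _ (hmem X Y)
      have hTXjW : T X (j (T X Y)) = 0 := by
        rw [hskew, hTj]
        rw [show T (T X Y) X = 0 by rw [hskew, hTXW, neg_zero]]
        simp
      have := key (j (T X Y))
      rw [hTXjW] at this
      simp only [map_zero, LinearMap.zero_apply] at this
      linarith
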